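/- Let ab and a'b' be segments in ℝ² such that the midpoint of ab does not lie on a'b' and the midpoint of a'b' does not lie on ab. Let a''b'' be the translate of a'b' whose midpoint coincides with the midpoint of ab. Then d_H(ab, a''b'') < d_H(ab, a'b'). -/

import Mathlib

noncomputable abbrev E2 : Type := EuclideanSpace ℝ (Fin 2)

/-!
Since the distance to a convex set is a convex function, the Hausdorff distance between two
segments is the largest distance from an endpoint of one to the other segment. Fix an endpoint `a`
of `ab` and put `T = a'b'`. Then `d(a, a''b'') = d(a - v, T) ≤ max (d(a, T), d(a - 2v, T))`, and
`a - 2v` is the reflection of `b` in the centre of `T`, so both terms are at most `d_H(ab, T)`.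
By strict convexity of the norm, equality would force the nearest points `p, q ∈ T` of `a` and
`a - 2v` to satisfy `p - q = 2v`; by the central symmetry of `T` the centre of `T` shifted by `v`,
which is the midpoint of `ab`, would then lie on `T`. The endpoints of `a''b''` are handled in the
same way with the two segments exchanged and `v` negated.
-/

open Metric Set
open scoped Convex

section NormedSpace

variable {E : Type*} [NormedAddCommGroup E] [NormedSpace ℝ E]

theorem isCompact_segment (a b : E) : IsCompact [a -[ℝ] b] := by
  rw [segment_eq_image]
  exact isCompact_Icc.image (by fun_prop)

theorem Convex.convexOn_infDist {K : Set E} (hK : Convex ℝ K) :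
    ConvexOn ℝ univ (infDist · K) := by
  refine ⟨convex_univ, fun x _ y _ a b ha hb hab => ?_⟩
  rcases K.eq_empty_or_nonempty with rfl | hne
  · simp
  refine le_of_forall_pos_le_add fun ε hε => ?_
  obtain ⟨p, hp, hxp⟩ := (infDist_lt_iff hne).1 (lt_add_of_pos_right (infDist x K) hε)
  obtain ⟨q, hq, hyq⟩ := (infDist_lt_iff hne).1 (lt_add_of_pos_right (infDist y K) hε)
  calc infDist (a • x + b • y) K ≤ dist (a • x + b • y) (a • p + b • q) :=
        infDist_le_dist_of_mem (hK hp hq ha hb hab)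
    _ ≤ dist (a • x) (a • p) + dist (b • y) (b • q) := dist_add_add_le _ _ _ _
    _ = a * dist x p + b * dist y q := by
        rw [dist_smul₀, dist_smul₀, Real.norm_of_nonneg ha, Real.norm_of_nonneg hb]
    _ ≤ a * (infDist x K + ε) + b * (infDist y K + ε) := by gcongr
    _ = a * infDist x K + b * infDist y K + ε := by linear_combination ε * hab

theorem hausdorffDist_segment_le (a b c d : E) :
    hausdorffDist [a -[ℝ] b] [c -[ℝ] d] ≤
      max (max (infDist a [c -[ℝ] d]) (infDist b [c -[ℝ] d]))
        (max (infDist c [a -[ℝ] b]) (infDist d [a -[ℝ] b])) := by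
  refine hausdorffDist_le_of_infDist (infDist_nonneg.trans ((le_max_left _ _).trans
    (le_max_left _ _))) (fun x hx => ?_) (fun y hy => ?_)
  · exact ((convex_segment c d).convexOn_infDist.le_on_segment (mem_univ a) (mem_univ b)
      hx).trans (le_max_left _ _)
  · exact ((convex_segment a b).convexOn_infDist.le_on_segment (mem_univ c) (mem_univ d)
      hy).trans (le_max_right _ _)

theorem infDist_le_hausdorffDist_segment {x a b : E} (hx : x ∈ [a -[ℝ] b]) (c d : E) :
    infDist x [c -[ℝ] d] ≤ hausdorffDist [a -[ℝ] b] [c -[ℝ] d] :=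
  infDist_le_hausdorffDist_of_mem hx <| hausdorffEDist_ne_top_of_nonempty_of_bounded
    ⟨a, left_mem_segment ℝ a b⟩ ⟨c, left_mem_segment ℝ c d⟩
    (isCompact_segment a b).isBounded (isCompact_segment c d).isBounded

theorem infDist_segment_add_right (x a b v : E) :
    infDist x [a + v -[ℝ] b + v] = infDist (x - v) [a -[ℝ] b] := by
  have := infDist_image (isometry_add_left v) (x := x - v) (t := [a -[ℝ] b])
  rwa [segment_translate_image, add_sub_cancel, add_comm v a, add_comm v b] at this

theorem image_pointReflection_midpoint_segment (a b : E) :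
    AffineIsometryEquiv.pointReflection ℝ (midpoint ℝ a b) '' [a -[ℝ] b] = [a -[ℝ] b] := by
  calc _ = [AffineIsometryEquiv.pointReflection ℝ (midpoint ℝ a b) a -[ℝ]
        AffineIsometryEquiv.pointReflection ℝ (midpoint ℝ a b) b] :=
        image_segment ℝ (AffineIsometryEquiv.pointReflection ℝ _).toAffineEquiv.toAffineMap a b
    _ = [a -[ℝ] b] := by
        rw [AffineIsometryEquiv.pointReflection_midpoint_left,
          AffineIsometryEquiv.pointReflection_midpoint_right, segment_symm]

theorem infDist_pointReflection_midpoint_segment (x a b : E) :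
    infDist (AffineIsometryEquiv.pointReflection ℝ (midpoint ℝ a b) x) [a -[ℝ] b] =
      infDist x [a -[ℝ] b] := by
  conv_lhs => rw [← image_pointReflection_midpoint_segment a b]
  exact infDist_image (AffineIsometryEquiv.pointReflection ℝ _).isometry

theorem midpoint_add_mem_segment_of_sub_eq {a b p q w : E} (hp : p ∈ [a -[ℝ] b])
    (hq : q ∈ [a -[ℝ] b]) (hpq : p - q = (2 : ℝ) • w) : midpoint ℝ a b + w ∈ [a -[ℝ] b] := by
  set m := midpoint ℝ a b
  have hq' : AffineIsometryEquiv.pointReflection ℝ m q ∈ [a -[ℝ] b] :=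
    image_pointReflection_midpoint_segment a b ▸ mem_image_of_mem _ hq
  convert (convex_segment a b).midpoint_mem hp hq' using 1
  rw [AffineIsometryEquiv.pointReflection_apply, midpoint_eq_smul_add, ← sub_add_cancel p q, hpq,
    vsub_eq_sub, vadd_eq_add, invOf_eq_inv]
  module

variable [StrictConvexSpace ℝ E]

theorem Convex.infDist_lt_max_infDist_add_sub {K : Set E} (hKc : Convex ℝ K) (hK : IsCompact K)
    (hne : K.Nonempty) {w : E} (hw : ∀ p ∈ K, ∀ q ∈ K, p - q ≠ (2 : ℝ) • w) (x : E) :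
    infDist x K < max (infDist (x + w) K) (infDist (x - w) K) := by
  by_contra! hle
  obtain ⟨p, hp, hpd⟩ := hK.exists_infDist_eq_dist hne (x + w)
  obtain ⟨q, hq, hqd⟩ := hK.exists_infDist_eq_dist hne (x - w)
  have hA : ‖x + w - p‖ ≤ infDist x K := by
    rw [← dist_eq_norm, ← hpd]; exact (le_max_left _ _).trans hle
  have hB : ‖x - w - q‖ ≤ infDist x K := by
    rw [← dist_eq_norm, ← hqd]; exact (le_max_right _ _).trans hle
  have hAB : x + w - p = x - w - q := by
    by_contra hneq
    have hlt := norm_combo_lt_of_ne hA hB hneq (a := 1 / 2) (b := 1 / 2) (by norm_num) (by norm_num)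
      (by norm_num)
    have hmid : x - midpoint ℝ p q = (1 / 2 : ℝ) • (x + w - p) + (1 / 2 : ℝ) • (x - w - q) := by
      rw [midpoint_eq_smul_add, invOf_eq_inv]; module
    rw [← hmid, ← dist_eq_norm] at hlt
    exact (infDist_le_dist_of_mem (hKc.midpoint_mem hp hq)).not_gt hlt
  exact hw p hp q hq (by rw [two_smul]; linear_combination (norm := module) -hAB)

theorem infDist_sub_lt_hausdorffDist_segment {a b c d v : E}
    (hv : midpoint ℝ c d + v = midpoint ℝ a b) (h : midpoint ℝ a b ∉ [c -[ℝ] d]) :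
    infDist (a - v) [c -[ℝ] d] < hausdorffDist [a -[ℝ] b] [c -[ℝ] d] := by
  have hw : ∀ p ∈ [c -[ℝ] d], ∀ q ∈ [c -[ℝ] d], p - q ≠ (2 : ℝ) • v := fun p hp q hq hpq =>
    h (hv ▸ midpoint_add_mem_segment_of_sub_eq hp hq hpq)
  have hb : infDist (a - v - v) [c -[ℝ] d] = infDist b [c -[ℝ] d] := by
    rw [← infDist_pointReflection_midpoint_segment b c d]
    congr 1
    rw [AffineIsometryEquiv.pointReflection_apply, vsub_eq_sub, vadd_eq_add, eq_sub_of_add_eq hv]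
    linear_combination (norm := module) -(midpoint_add_self ℝ a b)
  calc infDist (a - v) [c -[ℝ] d]
      < max (infDist (a - v + v) [c -[ℝ] d]) (infDist (a - v - v) [c -[ℝ] d]) :=
        (convex_segment c d).infDist_lt_max_infDist_add_sub (isCompact_segment c d)
          ⟨c, left_mem_segment ℝ c d⟩ hw (a - v)
    _ ≤ hausdorffDist [a -[ℝ] b] [c -[ℝ] d] := by
        rw [sub_add_cancel, hb]
        exact max_le (infDist_le_hausdorffDist_segment (left_mem_segment ℝ a b) c d)
          (infDist_le_hausdorffDist_segment (right_mem_segment ℝ a b) c d)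

end NormedSpace

/-- If neither midpoint lies on the other segment, recentering strictly decreases the
Hausdorff distance. -/
theorem hausdorff_dist_recenter_lt (a b a' b' : E2)
    (h₁ : midpoint ℝ a b ∉ segment ℝ a' b') (h₂ : midpoint ℝ a' b' ∉ segment ℝ a b)
    (v : E2) (hv : midpoint ℝ a' b' + v = midpoint ℝ a b) :
    Metric.hausdorffDist (segment ℝ a b) (segment ℝ (a' + v) (b' + v)) <
      Metric.hausdorffDist (segment ℝ a b) (segment ℝ a' b') := by
  have hv' : midpoint ℝ a b + -v = midpoint ℝ a' b' := by rw [← hv, add_neg_cancel_right]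
  refine (hausdorffDist_segment_le a b (a' + v) (b' + v)).trans_lt
    (max_lt (max_lt ?_ ?_) (max_lt ?_ ?_))
  · rw [infDist_segment_add_right]
    exact infDist_sub_lt_hausdorffDist_segment hv h₁
  · rw [infDist_segment_add_right, segment_symm ℝ a b]
    exact infDist_sub_lt_hausdorffDist_segment (by rwa [midpoint_comm (x := b)])
      (by rwa [midpoint_comm (x := b)])
  · rw [hausdorffDist_comm, ← sub_neg_eq_add]
    exact infDist_sub_lt_hausdorffDist_segment hv' h₂
  · rw [hausdorffDist_comm, ← sub_neg_eq_add, segment_symm ℝ a' b']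
    exact infDist_sub_lt_hausdorffDist_segment (by rwa [midpoint_comm (x := b')])
      (by rwa [midpoint_comm (x := b')])
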